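/- Let C ⊆ E be measurable with μ₀(C) > 0 and let K ⊆ [0,1] be a nonempty compact set. If s* ∈ E minimizes the interim worst-case functional U(s) = max_{κ ∈ K} [(1−κ)·E_{μ₀,C}[‖t−s‖²] + κ·∫_E ‖t−s‖² dμ₀] over E, then s* lies on the line segment joining α_C and α_pool, i.e. s* ∈ segment(α_C, α_pool). -/

import Mathlib

/-!
By the bias–variance decomposition, the `κ`-loss at `s` is a constant plus
`(1 - κ) ‖s - αC‖² + κ ‖s - αpool‖²`. If `p` is the nearest point of `segment αC αpool` to `s`,
the angle at `p` towards any point of the segment is obtuse, so passing from `s` to `p` lowers both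
squared distances, hence every `κ`-loss and therefore `U`, by at least `‖s - p‖²`. A minimizer
must thus coincide with its projection onto the segment.
-/

open MeasureTheory ProbabilityTheory RealInnerProductSpace

section InnerProductSpace
variable {E : Type*} [NormedAddCommGroup E] [InnerProductSpace ℝ E]

theorem exists_mem_forall_norm_sub_sq_add_norm_sub_sq_le {S : Set E} (hne : S.Nonempty)
    (hcomplete : IsComplete S) (hconv : Convex ℝ S) (x : E) :
    ∃ p ∈ S, ∀ w ∈ S, ‖x - p‖ ^ 2 + ‖p - w‖ ^ 2 ≤ ‖x - w‖ ^ 2 := by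
  obtain ⟨p, hp, hmin⟩ := exists_norm_eq_iInf_of_complete_convex hne hcomplete hconv x
  refine ⟨p, hp, fun w hw => ?_⟩
  have hobtuse := (norm_eq_iInf_iff_real_inner_le_zero hconv hp).1 hmin w hw
  rw [show x - w = (x - p) + (p - w) by abel, norm_add_sq_real, ← neg_sub w p, inner_neg_right]
  linarith

theorem isCompact_segment [FiniteDimensional ℝ E] (a b : E) : IsCompact (segment ℝ a b) := by
  simpa only [convexHull_pair] using (Set.toFinite {a, b}).isCompact_convexHull (𝕜 := ℝ)

variable [CompleteSpace E] [MeasurableSpace E] {ν : Measure E} [IsProbabilityMeasure ν]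

theorem integral_norm_sub_sq (h : MemLp (fun t => t) 2 ν) (s : E) :
    ∫ t, ‖t - s‖ ^ 2 ∂ν = ∫ t, ‖t‖ ^ 2 ∂ν - ‖∫ t, t ∂ν‖ ^ 2 + ‖s - ∫ t, t ∂ν‖ ^ 2 := by
  have h1 : Integrable (fun t => t) ν := h.integrable one_le_two
  have h2 : Integrable (fun t => ‖t‖ ^ 2) ν := h.integrable_norm_pow two_ne_zero
  have hi : Integrable (fun t => 2 * ⟪s, t⟫) ν := (h1.const_inner s).const_mul 2
  have hexpand : ∀ t : E, ‖t - s‖ ^ 2 = ‖t‖ ^ 2 - 2 * ⟪s, t⟫ + ‖s‖ ^ 2 := fun t => by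
    rw [norm_sub_sq_real, real_inner_comm]
  have hA : Integrable (fun t => ‖t‖ ^ 2 - 2 * ⟪s, t⟫) ν := h2.sub hi
  simp_rw [hexpand]
  rw [norm_sub_sq_real, integral_add hA (integrable_const _), integral_sub h2 hi,
    integral_const_mul, integral_inner h1, integral_const, probReal_univ, one_smul]
  ring

theorem mixture_integral_norm_sub_sq_add_le {ν₁ ν₂ : Measure E} [IsProbabilityMeasure ν₁]
    [IsProbabilityMeasure ν₂] (h₁ : MemLp (fun t => t) 2 ν₁) (h₂ : MemLp (fun t => t) 2 ν₂)
    {s p : E}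
    (hp : ∀ w ∈ segment ℝ (∫ t, t ∂ν₁) (∫ t, t ∂ν₂), ‖s - p‖ ^ 2 + ‖p - w‖ ^ 2 ≤ ‖s - w‖ ^ 2)
    {κ : ℝ} (hκ : κ ∈ Set.Icc 0 1) :
    (1 - κ) * ∫ t, ‖t - p‖ ^ 2 ∂ν₁ + κ * ∫ t, ‖t - p‖ ^ 2 ∂ν₂ + ‖s - p‖ ^ 2 ≤
      (1 - κ) * ∫ t, ‖t - s‖ ^ 2 ∂ν₁ + κ * ∫ t, ‖t - s‖ ^ 2 ∂ν₂ := by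
  have h₁p := hp _ (left_mem_segment ℝ _ _)
  have h₂p := hp _ (right_mem_segment ℝ _ _)
  rw [integral_norm_sub_sq h₁, integral_norm_sub_sq h₂, integral_norm_sub_sq h₁ s,
    integral_norm_sub_sq h₂ s]
  nlinarith [hκ.1, hκ.2]
end InnerProductSpace

theorem inv_smul_setIntegral_eq_integral_cond {Ω : Type*} [MeasurableSpace Ω] (μ : Measure Ω)
    (C : Set Ω) {F : Type*} [NormedAddCommGroup F] [NormedSpace ℝ F] (f : Ω → F) :
    (μ C).toReal⁻¹ • ∫ t in C, f t ∂μ = ∫ t, f t ∂μ[|C] := by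
  rw [ProbabilityTheory.cond, integral_smul_measure, ENNReal.toReal_inv]

theorem bddAbove_image_one_sub_mul_add_mul {K : Set ℝ} (hK : K ⊆ Set.Icc 0 1) (x y : ℝ) :
    BddAbove ((fun κ => (1 - κ) * x + κ * y) '' K) := by
  refine ⟨max x y, ?_⟩
  rintro _ ⟨κ, hκ, rfl⟩
  obtain ⟨h0, h1⟩ := hK hκ
  nlinarith [le_max_left x y, le_max_right x y]

theorem csSup_image_add_le_csSup_image {ι : Type*} {K : Set ι} (hK : K.Nonempty) {f g : ι → ℝ}
    (hg : BddAbove (g '' K)) {δ : ℝ} (h : ∀ κ ∈ K, f κ + δ ≤ g κ) :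
    sSup (f '' K) + δ ≤ sSup (g '' K) := by
  rw [← le_sub_iff_add_le]
  refine csSup_le (hK.image f) ?_
  rintro _ ⟨κ, hκ, rfl⟩
  rw [le_sub_iff_add_le]
  exact (h κ hκ).trans (le_csSup hg ⟨κ, hκ, rfl⟩)

theorem interim_optimizer_on_segment_general
    {L : ℕ} (μ₀ : Measure (EuclideanSpace ℝ (Fin L)))
    [IsProbabilityMeasure μ₀]
    (hL2 : Integrable (fun t => ‖t‖ ^ 2) μ₀)
    (C : Set (EuclideanSpace ℝ (Fin L)))
    (hC : 0 < μ₀ C)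
    (K : Set ℝ) (hKne : K.Nonempty)
    (hK : K ⊆ Set.Icc (0 : ℝ) 1)
    (αC αpool : EuclideanSpace ℝ (Fin L))
    (hαC : αC = ((μ₀ C).toReal)⁻¹ • ∫ t in C, t ∂μ₀)
    (hαpool : αpool = ∫ t, t ∂μ₀)
    (U : EuclideanSpace ℝ (Fin L) → ℝ)
    (hU : ∀ s, U s = sSup ((fun κ =>
      (1 - κ) * (((μ₀ C).toReal)⁻¹ * ∫ t in C, ‖t - s‖ ^ 2 ∂μ₀)
        + κ * ∫ t, ‖t - s‖ ^ 2 ∂μ₀) '' K))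
    (sstar : EuclideanSpace ℝ (Fin L))
    (hmin : ∀ s, U sstar ≤ U s) :
    sstar ∈ segment ℝ αC αpool := by
  have : IsProbabilityMeasure μ₀[|C] := cond_isProbabilityMeasure hC.ne'
  have hμ₀ : MemLp (fun t => t) 2 μ₀ :=
    (memLp_two_iff_integrable_sq_norm aestronglyMeasurable_id).2 hL2
  have hcond : MemLp (fun t => t) 2 μ₀[|C] :=
    (hμ₀.restrict C).smul_measure (ENNReal.inv_ne_top.2 hC.ne')
  have hU' : ∀ s, U s = sSup ((fun κ =>
      (1 - κ) * ∫ t, ‖t - s‖ ^ 2 ∂μ₀[|C] + κ * ∫ t, ‖t - s‖ ^ 2 ∂μ₀) '' K) := fun s => by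
    simp only [hU, ← inv_smul_setIntegral_eq_integral_cond, smul_eq_mul]
  rw [inv_smul_setIntegral_eq_integral_cond] at hαC
  obtain ⟨p, hpS, hp⟩ := exists_mem_forall_norm_sub_sq_add_norm_sub_sq_le
    ⟨αC, left_mem_segment ℝ αC αpool⟩ (isCompact_segment αC αpool).isComplete
    (convex_segment αC αpool) sstar
  rw [hαC, hαpool] at hp
  have hUp : U p + ‖sstar - p‖ ^ 2 ≤ U sstar := by
    rw [hU', hU']
    exact csSup_image_add_le_csSup_image hKne (bddAbove_image_one_sub_mul_add_mul hK _ _)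
      fun κ hκ => mixture_integral_norm_sub_sq_add_le hcond hμ₀ hp (hK hκ)
  have hdist : ‖sstar - p‖ = 0 := by nlinarith [hmin p, norm_nonneg (sstar - p)]
  rwa [sub_eq_zero.1 (norm_eq_zero.1 hdist)]

/-- Any minimizer of the interim worst-case functional lies on the line
segment between the conditional mean `αC` of the cell and the pooling action `αpool`. -/
theorem interim_optimizer_on_segment
    {L : ℕ} (μ₀ : Measure (EuclideanSpace ℝ (Fin L)))
    [IsProbabilityMeasure μ₀]
    (hL2 : Integrable (fun t => ‖t‖ ^ 2) μ₀)
    (C : Set (EuclideanSpace ℝ (Fin L))) (hCmeas : MeasurableSet C)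
    (hC : 0 < μ₀ C)
    (K : Set ℝ) (hKne : K.Nonempty) (hKcpt : IsCompact K)
    (hK : K ⊆ Set.Icc (0 : ℝ) 1)
    (αC αpool : EuclideanSpace ℝ (Fin L))
    (hαC : αC = ((μ₀ C).toReal)⁻¹ • ∫ t in C, t ∂μ₀)
    (hαpool : αpool = ∫ t, t ∂μ₀)
    (U : EuclideanSpace ℝ (Fin L) → ℝ)
    (hU : ∀ s, U s = sSup ((fun κ =>
      (1 - κ) * (((μ₀ C).toReal)⁻¹ * ∫ t in C, ‖t - s‖ ^ 2 ∂μ₀)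
        + κ * ∫ t, ‖t - s‖ ^ 2 ∂μ₀) '' K))
    (sstar : EuclideanSpace ℝ (Fin L))
    (hmin : ∀ s, U sstar ≤ U s) :
    sstar ∈ segment ℝ αC αpool :=
  interim_optimizer_on_segment_general μ₀ hL2 C hC K hKne hK αC αpool hαC hαpool U hU sstar hmin
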